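/- arXiv:1803.08170 — 2 statements merged into one kernel-verified Lean document; each statement's English description precedes it below -/
import Mathlib

section
/- Suppose the cutoff-threshold function μ₂ ↦ C(μ₁•, μ₂; γ) is Lipschitz continuous with constant ℓ where 0 < ℓ < 1/γ. Then the iteration map I(μ₂) := μ₂• − γ(μ₁• − E[X₁ | X₁ ≤ C(μ₁•, μ₂; γ)]), with X₁ ~ N(μ₁•, σ²), is a contraction mapping on ℝ with contraction constant γℓ ∈ (0,1). In particular I has a unique fixed point. -/
/-!
Writing `X = a + σ Z` with `Z` standard normal, `E[X | X ≤ c] = a − σ r((c − a)/σ)`, where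
`r = φ/Φ` is the inverse Mills ratio. So the truncated mean is `1`-Lipschitz in the cutoff as soon
as `r` is, and then the iteration map is `γℓ`-Lipschitz; Banach's fixed-point theorem does the rest.

Since `r' = −(zφΦ + φ²)/Φ²`, the bound `|r'| ≤ 1` comes from the truncated moments
`∫_{t ≤ z} t φ = −φ(z)` and `∫_{t ≤ z} t² φ = Φ(z) − z φ(z)`: they give
`zΦ + φ = ∫_{t ≤ z} (z − t) φ ≥ 0`, and
`Φ (Φ² − φ² − zφΦ) = ∫_{t ≤ z} (Φ t + φ)² φ ≥ 0`, which is `Φ³` times the variance of the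
truncated normal.
-/

open MeasureTheory Set

/-- Gaussian density with mean `a` and variance `s2`. -/
noncomputable def gauss (a s2 x : ℝ) : ℝ :=
  (Real.sqrt (2 * Real.pi * s2))⁻¹ * Real.exp (-(x - a) ^ 2 / (2 * s2))

/-- Mean of a `N(a, s2)` random variable truncated above at `c`, i.e. `E[X | X ≤ c]`. -/
noncomputable def truncMean (a s2 c : ℝ) : ℝ :=
  (∫ x in Iic c, x * gauss a s2 x) / (∫ x in Iic c, gauss a s2 x)

open Filter Real Topology

noncomputable def stdNormalPDF (z : ℝ) : ℝ := (√(2 * π))⁻¹ * exp (-z ^ 2 / 2)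

noncomputable def stdNormalCDF (z : ℝ) : ℝ := ∫ t in Iic z, stdNormalPDF t

noncomputable def invMillsRatio (z : ℝ) : ℝ := stdNormalPDF z / stdNormalCDF z

local notation "φ" => stdNormalPDF
local notation "Φ" => stdNormalCDF

lemma stdNormalPDF_pos (z : ℝ) : 0 < φ z := by
  unfold stdNormalPDF; positivity

lemma continuous_stdNormalPDF : Continuous φ := by
  unfold stdNormalPDF; fun_prop

lemma hasDerivAt_stdNormalPDF (z : ℝ) : HasDerivAt φ (-z * φ z) z := by
  have h : HasDerivAt (fun z : ℝ => -z ^ 2 / 2) (-z) z :=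
    ((hasDerivAt_pow 2 z).fun_neg.div_const 2).congr_deriv (by ring)
  exact (h.exp.const_mul _).congr_deriv (by simp only [stdNormalPDF]; ring)

lemma integrable_pow_mul_stdNormalPDF (n : ℕ) : Integrable fun t => t ^ n * φ t := by
  have h := (integrable_rpow_mul_exp_neg_mul_sq (b := 1 / 2) (by norm_num)
    (s := n) (by linarith [n.cast_nonneg (α := ℝ)])).const_mul (√(2 * π))⁻¹
  refine h.congr (Eventually.of_forall fun t => ?_)
  simp only [stdNormalPDF, rpow_natCast]
  ring_nf

lemma integrable_stdNormalPDF : Integrable φ := by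
  simpa using integrable_pow_mul_stdNormalPDF 0

lemma integrable_mul_stdNormalPDF : Integrable fun t => t * φ t := by
  simpa using integrable_pow_mul_stdNormalPDF 1

lemma tendsto_pow_mul_stdNormalPDF_atBot (n : ℕ) :
    Tendsto (fun t => t ^ n * φ t) atBot (𝓝 0) := by
  refine tendsto_zero_of_hasDerivAt_of_integrableOn_Iic (a := 0)
    (f' := fun t => n * (t ^ (n - 1) * φ t) - t ^ (n + 1) * φ t) (fun t _ => ?_) ?_
    (integrable_pow_mul_stdNormalPDF n).integrableOn
  · exact ((hasDerivAt_pow n t).mul (hasDerivAt_stdNormalPDF t)).congr_deriv (by ring)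
  · exact (((integrable_pow_mul_stdNormalPDF (n - 1)).const_mul n).sub
      (integrable_pow_mul_stdNormalPDF (n + 1))).integrableOn

lemma setIntegral_Iic_mul_stdNormalPDF (z : ℝ) : ∫ t in Iic z, t * φ t = -φ z := by
  have h := integral_Iic_of_hasDerivAt_of_tendsto' (f := fun t => -φ t) (m := 0) (a := z)
    (fun t _ => (hasDerivAt_stdNormalPDF t).neg) (by simpa using
      integrable_mul_stdNormalPDF.integrableOn)
    (by simpa using (tendsto_pow_mul_stdNormalPDF_atBot 0).neg)
  simpa using h

lemma setIntegral_Iic_sq_mul_stdNormalPDF (z : ℝ) :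
    ∫ t in Iic z, t ^ 2 * φ t = Φ z - z * φ z := by
  have hFTC := integral_Iic_of_hasDerivAt_of_tendsto' (f := fun t => -(t * φ t))
    (f' := fun t => t ^ 2 * φ t - φ t) (m := 0) (a := z)
    (fun t _ => ((hasDerivAt_id t).mul (hasDerivAt_stdNormalPDF t)).neg.congr_deriv
      (by simp only [id]; ring))
    ((integrable_pow_mul_stdNormalPDF 2).sub integrable_stdNormalPDF).integrableOn
    (by simpa using (tendsto_pow_mul_stdNormalPDF_atBot 1).neg)
  rw [integral_sub (integrable_pow_mul_stdNormalPDF 2).integrableOn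
    integrable_stdNormalPDF.integrableOn] at hFTC
  rw [stdNormalCDF]
  linarith

lemma stdNormalCDF_pos (z : ℝ) : 0 < Φ z := by
  refine (setIntegral_pos_iff_support_of_nonneg_ae (Eventually.of_forall fun t =>
    (stdNormalPDF_pos t).le) integrable_stdNormalPDF.integrableOn).2 ?_
  simp [Function.support_eq_univ fun t => (stdNormalPDF_pos t).ne']

lemma hasDerivAt_stdNormalCDF (z : ℝ) : HasDerivAt Φ (φ z) z := by
  refine ((continuous_stdNormalPDF.integral_hasStrictDerivAt 0 z).hasDerivAt.const_add (Φ 0)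
    ).congr_of_eventuallyEq (Eventually.of_forall fun w => ?_)
  dsimp only
  rw [← intervalIntegral.integral_Iic_sub_Iic integrable_stdNormalPDF.integrableOn
    integrable_stdNormalPDF.integrableOn, stdNormalCDF, stdNormalCDF]
  ring

lemma mul_stdNormalCDF_add_stdNormalPDF_nonneg (z : ℝ) : 0 ≤ z * Φ z + φ z := by
  have h : z * Φ z + φ z = ∫ t in Iic z, (z - t) * φ t := by
    simp only [sub_mul]
    rw [integral_sub (integrable_stdNormalPDF.const_mul z).integrableOn
      integrable_mul_stdNormalPDF.integrableOn, integral_const_mul,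
      setIntegral_Iic_mul_stdNormalPDF, stdNormalCDF]
    ring
  rw [h]
  exact setIntegral_nonneg measurableSet_Iic fun t ht =>
    mul_nonneg (sub_nonneg.2 ht) (stdNormalPDF_pos t).le

lemma stdNormalPDF_sq_add_mul_le_sq (z : ℝ) : φ z ^ 2 + z * φ z * Φ z ≤ Φ z ^ 2 := by
  have hvar : Φ z * (Φ z ^ 2 - φ z ^ 2 - z * φ z * Φ z) =
      ∫ t in Iic z, (Φ z * t + φ z) ^ 2 * φ t := by
    have hexpand : (fun t => (Φ z * t + φ z) ^ 2 * φ t) = fun t =>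
        Φ z ^ 2 * (t ^ 2 * φ t) + 2 * Φ z * φ z * (t * φ t) + φ z ^ 2 * φ t := by
      ext t; ring
    have h₀ := integrable_stdNormalPDF.integrableOn (s := Iic z)
    have h₁ := integrable_mul_stdNormalPDF.integrableOn (s := Iic z)
    have h₂ := (integrable_pow_mul_stdNormalPDF 2).integrableOn (s := Iic z)
    rw [hexpand, integral_add ((h₂.const_mul _).fun_add (h₁.const_mul _)) (h₀.const_mul _),
      integral_add (h₂.const_mul _) (h₁.const_mul _), integral_const_mul, integral_const_mul,
      integral_const_mul, setIntegral_Iic_sq_mul_stdNormalPDF, setIntegral_Iic_mul_stdNormalPDF,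
      ← stdNormalCDF]
    ring
  have h := (mul_nonneg_iff_of_pos_left (stdNormalCDF_pos z)).1 (hvar ▸ setIntegral_nonneg
    measurableSet_Iic fun t _ => mul_nonneg (sq_nonneg _) (stdNormalPDF_pos t).le)
  linarith

lemma hasDerivAt_invMillsRatio (z : ℝ) :
    HasDerivAt invMillsRatio (-(z * φ z * Φ z + φ z ^ 2) / Φ z ^ 2) z :=
  ((hasDerivAt_stdNormalPDF z).div (hasDerivAt_stdNormalCDF z)
    (stdNormalCDF_pos z).ne').congr_deriv (by ring)

lemma lipschitzWith_invMillsRatio : LipschitzWith 1 invMillsRatio := by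
  refine lipschitzWith_of_nnnorm_deriv_le (fun z => (hasDerivAt_invMillsRatio z).differentiableAt)
    fun z => ?_
  have hΦ := pow_pos (stdNormalCDF_pos z) 2
  have h₁ : 0 ≤ z * φ z * Φ z + φ z ^ 2 := by
    nlinarith [mul_stdNormalCDF_add_stdNormalPDF_nonneg z, stdNormalPDF_pos z]
  have h₂ := stdNormalPDF_sq_add_mul_le_sq z
  rw [← NNReal.coe_le_coe, coe_nnnorm, NNReal.coe_one, (hasDerivAt_invMillsRatio z).deriv,
    norm_div, norm_neg, Real.norm_of_nonneg h₁, Real.norm_of_nonneg hΦ.le, div_le_one hΦ]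
  linarith

lemma setIntegral_Iic_eq_smul_comp_add_mul {E : Type*} [NormedAddCommGroup E] [NormedSpace ℝ E]
    (f : ℝ → E) (a c : ℝ) {σ : ℝ} (hσ : 0 < σ) :
    ∫ x in Iic c, f x = σ • ∫ z in Iic ((c - a) / σ), f (a + σ * z) := by
  have hpre : (fun z => a + σ * z) ⁻¹' Iic c = Iic ((c - a) / σ) := by
    ext z
    simp only [mem_preimage, mem_Iic, le_div_iff₀ hσ]
    constructor <;> intro <;> linarith
  have hind (z : ℝ) : (Iic ((c - a) / σ)).indicator (fun z => f (a + σ * z)) z =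
      (Iic c).indicator f (a + σ * z) := hpre ▸ indicator_comp_right _
  rw [← integral_indicator measurableSet_Iic, ← integral_indicator measurableSet_Iic]
  simp_rw [hind]
  rw [Measure.integral_comp_mul_left (fun y => (Iic c).indicator f (a + y)),
    integral_add_left_eq_self, abs_of_pos (inv_pos.2 hσ), smul_smul, mul_inv_cancel₀ hσ.ne',
    one_smul]

lemma gauss_add_mul (a z : ℝ) {σ : ℝ} (hσ : 0 < σ) : gauss a (σ ^ 2) (a + σ * z) = φ z / σ := by
  have hsqrt : √(2 * π * σ ^ 2) = √(2 * π) * σ := by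
    rw [sqrt_mul (by positivity), sqrt_sq hσ.le]
  have hexp : -(a + σ * z - a) ^ 2 / (2 * σ ^ 2) = -z ^ 2 / 2 := by
    field_simp
    ring
  rw [gauss, hsqrt, hexp, stdNormalPDF, mul_inv]
  ring

lemma setIntegral_Iic_gauss (a c : ℝ) {σ : ℝ} (hσ : 0 < σ) :
    ∫ x in Iic c, gauss a (σ ^ 2) x = Φ ((c - a) / σ) := by
  simp_rw [setIntegral_Iic_eq_smul_comp_add_mul _ a c hσ, gauss_add_mul _ _ hσ, integral_div,
    smul_eq_mul]
  exact mul_div_cancel₀ _ hσ.ne'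

lemma setIntegral_Iic_mul_gauss (a c : ℝ) {σ : ℝ} (hσ : 0 < σ) :
    ∫ x in Iic c, x * gauss a (σ ^ 2) x = a * Φ ((c - a) / σ) - σ * φ ((c - a) / σ) := by
  have hcomp (z : ℝ) : (a + σ * z) * gauss a (σ ^ 2) (a + σ * z) = a / σ * φ z + z * φ z := by
    rw [gauss_add_mul _ _ hσ]
    field_simp
  simp_rw [setIntegral_Iic_eq_smul_comp_add_mul (fun x => x * gauss a (σ ^ 2) x) a c hσ, hcomp,
    smul_eq_mul]
  rw [integral_add (integrable_stdNormalPDF.const_mul _).integrableOn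
    integrable_mul_stdNormalPDF.integrableOn, integral_const_mul,
    setIntegral_Iic_mul_stdNormalPDF, ← stdNormalCDF]
  field_simp
  ring

lemma truncMean_eq_sub_mul_invMillsRatio (a c : ℝ) {σ : ℝ} (hσ : 0 < σ) :
    truncMean a (σ ^ 2) c = a - σ * invMillsRatio ((c - a) / σ) := by
  rw [truncMean, setIntegral_Iic_mul_gauss a c hσ, setIntegral_Iic_gauss a c hσ, invMillsRatio]
  field_simp [(stdNormalCDF_pos _).ne']

lemma lipschitzWith_truncMean (a : ℝ) {σ : ℝ} (hσ : 0 < σ) :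
    LipschitzWith 1 (truncMean a (σ ^ 2)) := by
  refine LipschitzWith.of_dist_le_mul fun c c' => ?_
  have h := lipschitzWith_invMillsRatio.dist_le_mul ((c - a) / σ) ((c' - a) / σ)
  simp only [Real.dist_eq, NNReal.coe_one, one_mul] at h ⊢
  rw [truncMean_eq_sub_mul_invMillsRatio a c hσ, truncMean_eq_sub_mul_invMillsRatio a c' hσ]
  calc |a - σ * invMillsRatio ((c - a) / σ) - (a - σ * invMillsRatio ((c' - a) / σ))|
      = σ * |invMillsRatio ((c - a) / σ) - invMillsRatio ((c' - a) / σ)| := by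
        rw [sub_sub_sub_cancel_left, ← mul_sub, abs_mul, abs_of_pos hσ, abs_sub_comm]
    _ ≤ σ * |(c - a) / σ - (c' - a) / σ| := by gcongr
    _ = |c - c'| := by
        rw [← sub_div, sub_sub_sub_cancel_right, abs_div, abs_of_pos hσ, mul_div_cancel₀ _ hσ.ne']

/-- If the cutoff-threshold function `μ₂ ↦ C(μ₁•, μ₂; γ)` is `ℓ`-Lipschitz with
`0 < ℓ < 1/γ`, then the iteration map
`I(μ₂) = μ₂• − γ(μ₁• − E[X₁ | X₁ ≤ C(μ₂)])`, with `X₁ ~ N(μ₁•, σ²)`, is a contraction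
with constant `γℓ ∈ (0,1)`; in particular it has a unique fixed point. -/
theorem iteration_map_contraction (μ1b μ2b σ γ ℓ : ℝ) (hσ : 0 < σ) (hγ : 0 < γ)
    (C : ℝ → ℝ) (hℓ0 : 0 < ℓ) (hℓ : ℓ < 1 / γ)
    (hLip : ∀ x y : ℝ, |C x - C y| ≤ ℓ * |x - y|) :
    (∀ x y : ℝ,
        |(μ2b - γ * (μ1b - truncMean μ1b (σ ^ 2) (C x))) -
            (μ2b - γ * (μ1b - truncMean μ1b (σ ^ 2) (C y)))| ≤ γ * ℓ * |x - y|) ∧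
    0 < γ * ℓ ∧ γ * ℓ < 1 ∧
    (∃! μ : ℝ, μ2b - γ * (μ1b - truncMean μ1b (σ ^ 2) (C μ)) = μ) := by
  let I : ℝ → ℝ := fun μ => μ2b - γ * (μ1b - truncMean μ1b (σ ^ 2) (C μ))
  have hI : ∀ x y, |I x - I y| ≤ γ * ℓ * |x - y| := fun x y => calc
    |I x - I y| = γ * |truncMean μ1b (σ ^ 2) (C x) - truncMean μ1b (σ ^ 2) (C y)| := by
        rw [← abs_of_pos hγ, ← abs_mul]
        congr 1
        simp only [I]
        ring
    _ ≤ γ * |C x - C y| := by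
        refine mul_le_mul_of_nonneg_left ?_ hγ.le
        simpa [Real.dist_eq] using (lipschitzWith_truncMean μ1b hσ).dist_le_mul (C x) (C y)
    _ ≤ γ * (ℓ * |x - y|) := by gcongr; exact hLip x y
    _ = γ * ℓ * |x - y| := by ring
  have hγℓ : γ * ℓ < 1 := by rwa [lt_div_iff₀ hγ, mul_comm] at hℓ
  have hI_contracting : ContractingWith ⟨γ * ℓ, by positivity⟩ I :=
    ⟨hγℓ, LipschitzWith.of_dist_le_mul fun x y => by
      rw [Real.dist_eq, Real.dist_eq]; exact hI x y⟩
  exact ⟨hI, by positivity, hγℓ, hI_contracting.fixedPoint I, hI_contracting.fixedPoint_isFixedPt,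
    fun μ hμ => hI_contracting.fixedPoint_unique hμ⟩
end

section
/- Given cutoff thresholds c₀, ..., c_{t−1} ∈ ℝ, the minimizers of the summed KL divergence Σ_{τ=0}^{t−1} D_KL(H•(c_τ) || H(Ψ(μ₁, μ₂; γ); c_τ)) are μ₁* = μ₁• and μ₂* = (Σ_{τ=0}^{t−1} P[X₁ ≤ c_τ]·μ₂*(c_τ)) / (Σ_{τ=0}^{t−1} P[X₁ ≤ c_τ]), where μ₂*(c) = μ₂• − γ(μ₁• − E[X₁ | X₁ ≤ c]) is the single-cutoff pseudo-true fundamental. -/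
open MeasureTheory Set

/-- KL divergence from the true censored history distribution to the subjective one
with fundamentals `μ1, μ2`, bias `γ`, censoring threshold `c`. -/
noncomputable def klObj (μ1b μ2b s2 γ c μ1 μ2 : ℝ) : ℝ :=
  (∫ x in Ioi c, gauss μ1b s2 x * Real.log (gauss μ1b s2 x / gauss μ1 s2 x)) +
    ∫ x1 in Iic c, ∫ x2 : ℝ,
      gauss μ1b s2 x1 * gauss μ2b s2 x2 *
        Real.log (gauss μ1b s2 x1 * gauss μ2b s2 x2 /
          (gauss μ1 s2 x1 * gauss (μ2 - γ * (x1 - μ1)) s2 x2))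

/-!
All densities share the variance `s2`, so every log-likelihood ratio is affine in the data and,
by the chain rule for the censored history, each KL term is an explicit quadratic:
`klObj … c μ1 μ2 = ((μ1 - μ1b)² + ∫_{x ≤ c} φ(x) (μ2 - γ (x - μ1) - μ2b)²) / (2 s2)`.
Summed over the cutoffs this is `t (μ1 - μ1b)² + P y² - 2 γ M y + const` in
`y = μ2 + γ μ1 - μ2b`, where `P` and `M` are the summed truncated zeroth and first moments of
`N(μ1b, s2)`. Its minimizers have `μ1 = μ1b` and `P y = γ M`, which is the weighted-average
formula because the `τ`-th truncated first moment is `P[X₁ ≤ c_τ] · E[X₁ | X₁ ≤ c_τ]`.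
-/

open ProbabilityTheory NNReal

lemma gauss_eq_gaussianPDFReal {s2 : ℝ} (hs2 : 0 ≤ s2) (a : ℝ) :
    gauss a s2 = gaussianPDFReal a s2.toNNReal := by
  ext x
  rw [gaussianPDFReal_def, Real.coe_toNNReal _ hs2, gauss]

lemma gauss_pos {s2 : ℝ} (hs2 : 0 < s2) (a x : ℝ) : 0 < gauss a s2 x := by
  rw [gauss_eq_gaussianPDFReal hs2.le]
  exact gaussianPDFReal_pos _ _ _ (Real.toNNReal_pos.2 hs2).ne'

lemma integrable_gauss {s2 : ℝ} (hs2 : 0 < s2) (a : ℝ) : Integrable (gauss a s2) := by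
  rw [gauss_eq_gaussianPDFReal hs2.le]
  exact integrable_gaussianPDFReal _ _

lemma integral_gauss {s2 : ℝ} (hs2 : 0 < s2) (a : ℝ) : ∫ x, gauss a s2 x = 1 := by
  rw [gauss_eq_gaussianPDFReal hs2.le]
  exact integral_gaussianPDFReal_eq_one _ (Real.toNNReal_pos.2 hs2).ne'

lemma setIntegral_gauss_pos {s2 : ℝ} (hs2 : 0 < s2) (a : ℝ) {s : Set ℝ} (hs : volume s ≠ 0) :
    0 < ∫ x in s, gauss a s2 x := by
  rw [setIntegral_pos_iff_support_of_nonneg_ae (ae_of_all _ fun x ↦ (gauss_pos hs2 a x).le)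
    (integrable_gauss hs2 a).integrableOn,
    Function.support_eq_univ fun x ↦ (gauss_pos hs2 a x).ne', univ_inter]
  exact pos_iff_ne_zero.2 hs

lemma integral_gauss_mul {s2 : ℝ} (hs2 : 0 < s2) (a : ℝ) (f : ℝ → ℝ) :
    ∫ x, gauss a s2 x * f x = ∫ x, f x ∂gaussianReal a s2.toNNReal := by
  rw [gauss_eq_gaussianPDFReal hs2.le]
  exact (integral_gaussianReal_eq_integral_smul (Real.toNNReal_pos.2 hs2).ne').symm

lemma integrable_gauss_mul_iff {s2 : ℝ} (hs2 : 0 < s2) (a : ℝ) {f : ℝ → ℝ} :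
    Integrable (fun x ↦ gauss a s2 x * f x) ↔ Integrable f (gaussianReal a s2.toNNReal) := by
  rw [gaussianReal_of_var_ne_zero _ (Real.toNNReal_pos.2 hs2).ne',
    integrable_withDensity_iff_integrable_smul' (measurable_gaussianPDF _ _)
      (ae_of_all _ fun _ ↦ gaussianPDF_lt_top), gauss_eq_gaussianPDFReal hs2.le]
  simp only [toReal_gaussianPDF, smul_eq_mul]

lemma integrable_pow_gaussianReal (μ : ℝ) (v : ℝ≥0) (n : ℕ) :
    Integrable (fun x ↦ x ^ n) (gaussianReal μ v) :=
  (memLp_id_gaussianReal n).integrable_norm_pow'.congr' (by fun_prop)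
    (ae_of_all _ fun x ↦ by simp)

lemma integrable_id_gaussianReal (μ : ℝ) (v : ℝ≥0) :
    Integrable (fun x ↦ x) (gaussianReal μ v) := by
  simpa using integrable_pow_gaussianReal μ v 1

lemma integral_affine_gaussianReal (μ : ℝ) (v : ℝ≥0) (p q : ℝ) :
    ∫ x, (p + q * x) ∂gaussianReal μ v = p + q * μ := by
  rw [integral_add (integrable_const p) ((integrable_id_gaussianReal μ v).const_mul q),
    integral_const, integral_const_mul, integral_id_gaussianReal, probReal_univ, one_smul]

lemma integrable_pow_mul_gauss {s2 : ℝ} (hs2 : 0 < s2) (a : ℝ) (n : ℕ) :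
    Integrable (fun x ↦ x ^ n * gauss a s2 x) := by
  simpa only [mul_comm] using
    (integrable_gauss_mul_iff hs2 a).2 (integrable_pow_gaussianReal a _ n)

lemma log_gauss_div {s2 : ℝ} (hs2 : 0 < s2) (a b x : ℝ) :
    Real.log (gauss a s2 x / gauss b s2 x) = (b ^ 2 - a ^ 2) / (2 * s2) + (a - b) / s2 * x := by
  have hC : (Real.sqrt (2 * Real.pi * s2))⁻¹ ≠ 0 := by positivity
  rw [gauss, gauss, mul_div_mul_left _ _ hC, ← Real.exp_sub, Real.log_exp]
  field_simp
  ring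

lemma integrable_gauss_mul_log_gauss_div {s2 : ℝ} (hs2 : 0 < s2) (a b : ℝ) :
    Integrable (fun x ↦ gauss a s2 x * Real.log (gauss a s2 x / gauss b s2 x)) := by
  simp_rw [log_gauss_div hs2]
  exact (integrable_gauss_mul_iff hs2 a).2 <|
    (integrable_const _).add ((integrable_id_gaussianReal a _).const_mul _)

lemma integral_gauss_mul_log_gauss_div {s2 : ℝ} (hs2 : 0 < s2) (a b : ℝ) :
    ∫ x, gauss a s2 x * Real.log (gauss a s2 x / gauss b s2 x) = (a - b) ^ 2 / (2 * s2) := by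
  simp_rw [log_gauss_div hs2]
  rw [integral_gauss_mul hs2, integral_affine_gaussianReal]
  field_simp
  ring

lemma integral_gauss_mul_gauss_mul_log {s2 : ℝ} (hs2 : 0 < s2) (a₁ a₂ b₁ b₂ x₁ : ℝ) :
    ∫ x₂, gauss a₁ s2 x₁ * gauss a₂ s2 x₂ *
        Real.log (gauss a₁ s2 x₁ * gauss a₂ s2 x₂ / (gauss b₁ s2 x₁ * gauss b₂ s2 x₂)) =
      gauss a₁ s2 x₁ * Real.log (gauss a₁ s2 x₁ / gauss b₁ s2 x₁) +
        gauss a₁ s2 x₁ * (b₂ - a₂) ^ 2 / (2 * s2) := by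
  set p := gauss a₁ s2 x₁
  set r := gauss b₁ s2 x₁
  have hsplit : ∀ x₂, p * gauss a₂ s2 x₂ *
        Real.log (p * gauss a₂ s2 x₂ / (r * gauss b₂ s2 x₂)) =
      p * Real.log (p / r) * gauss a₂ s2 x₂ +
        p * (gauss a₂ s2 x₂ * Real.log (gauss a₂ s2 x₂ / gauss b₂ s2 x₂)) := by
    intro x₂
    rw [← div_mul_div_comm, Real.log_mul (div_pos (gauss_pos hs2 _ _) (gauss_pos hs2 _ _)).ne'
      (div_pos (gauss_pos hs2 _ _) (gauss_pos hs2 _ _)).ne']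
    ring
  simp_rw [hsplit]
  rw [integral_add ((integrable_gauss hs2 a₂).const_mul _)
      ((integrable_gauss_mul_log_gauss_div hs2 a₂ b₂).const_mul _), integral_const_mul,
    integral_const_mul, integral_gauss hs2, integral_gauss_mul_log_gauss_div hs2]
  ring

lemma integrable_gauss_mul_sq_sub {s2 : ℝ} (hs2 : 0 < s2) (a y γ : ℝ) :
    Integrable (fun x ↦ gauss a s2 x * (y - γ * x) ^ 2) :=
  (integrable_gauss_mul_iff hs2 a).2 <|
    ((memLp_const y).sub ((memLp_id_gaussianReal 2).const_mul γ)).integrable_sq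

theorem klObj_eq_integral_sq {s2 : ℝ} (hs2 : 0 < s2) (μ1b μ2b γ c μ1 μ2 : ℝ) :
    klObj μ1b μ2b s2 γ c μ1 μ2 = ((μ1 - μ1b) ^ 2 +
      ∫ x in Iic c, gauss μ1b s2 x * (μ2 - γ * (x - μ1) - μ2b) ^ 2) / (2 * s2) := by
  have hsq : Integrable (fun x ↦ gauss μ1b s2 x * (μ2 - γ * (x - μ1) - μ2b) ^ 2) :=
    (integrable_gauss_mul_sq_sub hs2 μ1b (μ2 + γ * μ1 - μ2b) γ).congr
      (ae_of_all _ fun x ↦ by ring)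
  have hlog := integrable_gauss_mul_log_gauss_div hs2 μ1b μ1
  have hwhole := intervalIntegral.integral_Iic_add_Ioi (b := c) hlog.integrableOn hlog.integrableOn
  unfold klObj
  simp_rw [integral_gauss_mul_gauss_mul_log hs2]
  rw [integral_add hlog.integrableOn (hsq.div_const _).integrableOn, ← add_assoc,
    add_comm (∫ _ in Ioi c, _), hwhole, integral_gauss_mul_log_gauss_div hs2, integral_div,
    ← add_div, sub_sq_comm]

lemma setIntegral_gauss_mul_sq_sub {s2 : ℝ} (hs2 : 0 < s2) (a y γ : ℝ) (s : Set ℝ) :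
    ∫ x in s, gauss a s2 x * (y - γ * x) ^ 2 =
      y ^ 2 * (∫ x in s, gauss a s2 x) - 2 * y * γ * (∫ x in s, x * gauss a s2 x) +
        γ ^ 2 * ∫ x in s, x ^ 2 * gauss a s2 x := by
  have h0 : IntegrableOn (gauss a s2) s := (integrable_gauss hs2 a).integrableOn
  have h1 : IntegrableOn (fun x ↦ x * gauss a s2 x) s := by
    simpa using (integrable_pow_mul_gauss hs2 a 1).integrableOn
  have h2 : IntegrableOn (fun x ↦ x ^ 2 * gauss a s2 x) s :=
    (integrable_pow_mul_gauss hs2 a 2).integrableOn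
  calc ∫ x in s, gauss a s2 x * (y - γ * x) ^ 2
      = ∫ x in s, (y ^ 2 * gauss a s2 x - 2 * y * γ * (x * gauss a s2 x) +
          γ ^ 2 * (x ^ 2 * gauss a s2 x)) :=
        integral_congr_ae (ae_of_all _ fun x ↦ by ring)
    _ = _ := by
      rw [integral_add ?_ (h2.const_mul _), integral_sub (h0.const_mul _) (h1.const_mul _),
        integral_const_mul, integral_const_mul, integral_const_mul]
      exact (h0.const_mul _).sub (h1.const_mul _)

theorem sum_klObj_eq_quadratic {ι : Type*} [Fintype ι] {s2 : ℝ} (hs2 : 0 < s2)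
    (μ1b μ2b γ : ℝ) (c : ι → ℝ) (μ1 μ2 : ℝ) :
    ∑ τ, klObj μ1b μ2b s2 γ (c τ) μ1 μ2 =
      (Fintype.card ι * (μ1 - μ1b) ^ 2 +
        ((μ2 + γ * μ1 - μ2b) ^ 2 * (∑ τ, ∫ x in Iic (c τ), gauss μ1b s2 x) -
          2 * (μ2 + γ * μ1 - μ2b) * γ * (∑ τ, ∫ x in Iic (c τ), x * gauss μ1b s2 x) +
          γ ^ 2 * ∑ τ, ∫ x in Iic (c τ), x ^ 2 * gauss μ1b s2 x)) / (2 * s2) := by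
  have hexpand : ∀ τ, ∫ x in Iic (c τ), gauss μ1b s2 x * (μ2 - γ * (x - μ1) - μ2b) ^ 2 =
      (μ2 + γ * μ1 - μ2b) ^ 2 * (∫ x in Iic (c τ), gauss μ1b s2 x) -
        2 * (μ2 + γ * μ1 - μ2b) * γ * (∫ x in Iic (c τ), x * gauss μ1b s2 x) +
        γ ^ 2 * ∫ x in Iic (c τ), x ^ 2 * gauss μ1b s2 x := fun τ ↦ by
    rw [← setIntegral_gauss_mul_sq_sub hs2]
    exact integral_congr_ae (ae_of_all _ fun x ↦ by ring)
  simp only [klObj_eq_integral_sq hs2, hexpand, ← Finset.sum_div, Finset.sum_add_distrib,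
    Finset.sum_sub_distrib, ← Finset.mul_sum, Finset.sum_const, Finset.card_univ, nsmul_eq_mul]

lemma setIntegral_gauss_mul_truncMean {s2 : ℝ} (hs2 : 0 < s2) (a c : ℝ) :
    (∫ x in Iic c, gauss a s2 x) * truncMean a s2 c = ∫ x in Iic c, x * gauss a s2 x :=
  mul_div_cancel₀ _ (setIntegral_gauss_pos hs2 a (by simp)).ne'

lemma eq_zero_and_mul_eq_of_forall_le {n P b u y : ℝ} (hn : 0 < n) (hP : 0 < P)
    (h : ∀ u' y' : ℝ,
      n * u ^ 2 + (P * y ^ 2 - 2 * b * y) ≤ n * u' ^ 2 + (P * y' ^ 2 - 2 * b * y')) :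
    u = 0 ∧ P * y = b := by
  have hle : n * P * u ^ 2 + (P * y - b) ^ 2 ≤ 0 := by
    have := h 0 (b / P)
    field_simp at this
    nlinarith
  have hu : n * P * u ^ 2 = 0 :=
    le_antisymm (by nlinarith [sq_nonneg (P * y - b)]) (by positivity)
  have hy : (P * y - b) ^ 2 = 0 := le_antisymm (by nlinarith [sq_nonneg u]) (sq_nonneg _)
  exact ⟨by simpa [hn.ne', hP.ne'] using hu, by simpa [sub_eq_zero] using hy⟩

theorem large_generations_pseudo_true_general (μ1b μ2b s2 γ : ℝ) (hs2 : 0 < s2)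
    (t : ℕ) (ht : 0 < t) (c : Fin t → ℝ) :
    ∀ μ1 μ2 : ℝ,
      (∀ μ1' μ2' : ℝ,
          ∑ τ, klObj μ1b μ2b s2 γ (c τ) μ1 μ2 ≤ ∑ τ, klObj μ1b μ2b s2 γ (c τ) μ1' μ2') →
      μ1 = μ1b ∧
        μ2 = (∑ τ, (∫ x in Iic (c τ), gauss μ1b s2 x) *
                (μ2b - γ * (μ1b - truncMean μ1b s2 (c τ)))) /
              ∑ τ, ∫ x in Iic (c τ), gauss μ1b s2 x := by
  intro μ1 μ2 hmin
  set P := ∑ τ, ∫ x in Iic (c τ), gauss μ1b s2 x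
  set M := ∑ τ, ∫ x in Iic (c τ), x * gauss μ1b s2 x
  have hP : 0 < P := Finset.sum_pos (fun τ _ ↦ setIntegral_gauss_pos hs2 _ (by simp))
    ⟨⟨0, ht⟩, Finset.mem_univ _⟩
  obtain ⟨hμ1, hμ2⟩ : μ1 - μ1b = 0 ∧ P * (μ2 + γ * μ1 - μ2b) = γ * M := by
    refine eq_zero_and_mul_eq_of_forall_le (n := t) (by exact_mod_cast ht) hP fun u y ↦ ?_
    have := hmin (μ1b + u) (y - γ * (μ1b + u) + μ2b)
    rw [sum_klObj_eq_quadratic hs2, sum_klObj_eq_quadratic hs2,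
      div_le_div_iff_of_pos_right (by positivity), Fintype.card_fin] at this
    ring_nf at this ⊢
    linarith
  refine ⟨sub_eq_zero.1 hμ1, ?_⟩
  have hweighted : ∑ τ, (∫ x in Iic (c τ), gauss μ1b s2 x) *
      (μ2b - γ * (μ1b - truncMean μ1b s2 (c τ))) = (μ2b - γ * μ1b) * P + γ * M := by
    rw [Finset.mul_sum, Finset.mul_sum, ← Finset.sum_add_distrib]
    refine Finset.sum_congr rfl fun τ _ ↦ ?_
    rw [← setIntegral_gauss_mul_truncMean hs2]
    ring
  rw [hweighted, eq_div_iff hP.ne']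
  linear_combination hμ2 - P * γ * hμ1

/-- Given cutoffs `c₀,…,c_{t−1}`, the minimizers of the summed KL divergence are
`μ₁* = μ₁•` and `μ₂*` equal to the `P[X₁ ≤ c_τ]`-weighted average of the single-cutoff
pseudo-true fundamentals `μ₂*(c_τ) = μ₂• − γ(μ₁• − E[X₁ | X₁ ≤ c_τ])`. -/
theorem large_generations_pseudo_true (μ1b μ2b s2 γ : ℝ) (hs2 : 0 < s2) (hγ : 0 < γ)
    (t : ℕ) (ht : 0 < t) (c : Fin t → ℝ) :
    ∀ μ1 μ2 : ℝ,
      (∀ μ1' μ2' : ℝ,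
          ∑ τ, klObj μ1b μ2b s2 γ (c τ) μ1 μ2 ≤ ∑ τ, klObj μ1b μ2b s2 γ (c τ) μ1' μ2') →
      μ1 = μ1b ∧
        μ2 = (∑ τ, (∫ x in Iic (c τ), gauss μ1b s2 x) *
                (μ2b - γ * (μ1b - truncMean μ1b s2 (c τ)))) /
              ∑ τ, ∫ x in Iic (c τ), gauss μ1b s2 x :=
  large_generations_pseudo_true_general μ1b μ2b s2 γ hs2 t ht c
end
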